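/- arXiv:2402.12579 — 2 statements merged into one kernel-verified Lean document; each statement's English description precedes it below -/
import Mathlib

section
/- Let X ⊆ {0,1}^ℤ be a measure-theoretically subordinate subshift. Then the base measure ν is unique and ergodic. Moreover, ν is the unique measure of maximal density on X, i.e. ν(1) = sup{μ(1) : μ ∈ 𝓜(X)}, and ν is the only measure in 𝓜(X) attaining this supremum. -/
open MeasureTheory Filter Topology

/-- The full shift space `{0,1}^ℤ`, with `Bool` playing the role of `{0,1}`
(`false` ↔ `0`, `true` ↔ `1`). -/
abbrev BinSeq : Type := ℤ → Bool

/-- The left shift `σ`. -/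
def shift : BinSeq → BinSeq := fun x n => x (n + 1)

/-- The product shift `σ × σ`. -/
def shift2 : BinSeq × BinSeq → BinSeq × BinSeq := Prod.map shift shift

/-- The product shift `σ × σ × σ` on triples `((w,x),y)`. -/
def shift3 : (BinSeq × BinSeq) × BinSeq → (BinSeq × BinSeq) × BinSeq := Prod.map shift2 shift

/-- Coordinatewise multiplication `M(x,y)` of two 0-1 sequences. -/
def Mmul : BinSeq × BinSeq → BinSeq := fun p n => p.1 n && p.2 n

/-- The map `N((w,x),y) = (1-y)·w + y·x` (coordinatewise: `x` where `y = 1`, `w` where `y = 0`). -/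
def Nmap : (BinSeq × BinSeq) × BinSeq → BinSeq := fun t n => bif t.2 n then t.1.2 n else t.1.1 n

/-- The coordinatewise partial order `y ≤ x` on `{0,1}^ℤ`. -/
def leSeq (y x : BinSeq) : Prop := ∀ n, y n ≤ x n

/-- A subshift: a closed, shift-invariant subset of `{0,1}^ℤ`. -/
def IsSubshift (X : Set BinSeq) : Prop := IsClosed X ∧ shift ⁻¹' X = X

/-- The set of `T`-invariant Borel probability measures. -/
def InvProb {α : Type*} [MeasurableSpace α] (T : α → α) : Set (Measure α) :=
  {μ | IsProbabilityMeasure μ ∧ Measure.map T μ = μ}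

/-- `𝓜(X)`: shift-invariant Borel probability measures concentrated on `X`. -/
def MeasOn (X : Set BinSeq) : Set (Measure BinSeq) :=
  {μ | μ ∈ InvProb shift ∧ μ X = 1}

/-- `𝓜(Z)` for `Z ⊆ {0,1}^ℤ × {0,1}^ℤ`. -/
def MeasOn2 (Z : Set (BinSeq × BinSeq)) : Set (Measure (BinSeq × BinSeq)) :=
  {ρ | ρ ∈ InvProb shift2 ∧ ρ Z = 1}

/-- `X` is a measure-theoretically subordinate subshift with base measure `ν`:
`𝓜(X) = {M_*(ρ) : ρ ∈ 𝓜({0,1}^ℤ × {0,1}^ℤ, σ×σ), (π₁)_*(ρ) = ν}`. -/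
def Subord (X : Set BinSeq) (ν : Measure BinSeq) : Prop :=
  MeasOn X = {μ | ∃ ρ ∈ InvProb shift2,
    Measure.map Prod.fst ρ = ν ∧ Measure.map Mmul ρ = μ}

/-- `X` is a sandwich measure-theoretically subordinate subshift with pre-base measure `ρ`:
`𝓜(X) = {N_*(κ) : κ ∈ 𝓜(({0,1}^ℤ)³), (π₁,₂)_*(κ) = ρ}`. -/
def SandwichSubord (X : Set BinSeq) (ρ : Measure (BinSeq × BinSeq)) : Prop :=
  MeasOn X = {μ | ∃ κ ∈ InvProb shift3,
    Measure.map Prod.fst κ = ρ ∧ Measure.map Nmap κ = μ}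

/-- `ρ({(w,x) : w ≤ x coordinatewise}) = 1`: a pre-base measure satisfying this is a base
measure. -/
def AboveDiag (ρ : Measure (BinSeq × BinSeq)) : Prop :=
  ρ {p : BinSeq × BinSeq | ∀ n, p.1 n ≤ p.2 n} = 1

/-- The cylinder `{x : x₀ = b}`. -/
def cylB (b : Bool) : Set BinSeq := {x : BinSeq | x 0 = b}

/-- The set `[w,x] = {σ^k y : w ≤ y ≤ x, k ∈ ℤ}`. -/
def sandwichSet (w x : BinSeq) : Set BinSeq :=
  {z | ∃ (k : ℤ) (y : BinSeq), (∀ n, w n ≤ y n) ∧ (∀ n, y n ≤ x n) ∧ z = fun n => y (n + k)}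

/-- Topological entropy (base-2) of a subshift: exponential growth rate of the number of
`n`-blocks appearing in `X`. -/
noncomputable def htop (X : Set BinSeq) : ℝ :=
  Filter.limsup (fun n : ℕ =>
    Real.logb 2
      ((Set.ncard {A : Fin n → Bool | ∃ x ∈ X, ∀ i : Fin n, x ((i : ℕ) : ℤ) = A i} : ℝ))
      / (n : ℝ)) Filter.atTop

/-- Kolmogorov–Sinai entropy (base-2) of a shift-invariant measure on `{0,1}^ℤ`,
computed via the generating partition into cylinders. -/
noncomputable def entropy (μ : Measure BinSeq) : ℝ :=
  Filter.limsup (fun n : ℕ =>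
    (∑ A : Fin n → Bool,
      Real.negMulLog ((μ {x : BinSeq | ∀ i : Fin n, x ((i : ℕ) : ℤ) = A i}).toReal))
      / ((n : ℝ) * Real.log 2)) Filter.atTop

/-- Kolmogorov–Sinai entropy (base-2) of a `σ×σ`-invariant measure on
`{0,1}^ℤ × {0,1}^ℤ`. -/
noncomputable def entropy2 (ρ : Measure (BinSeq × BinSeq)) : ℝ :=
  Filter.limsup (fun n : ℕ =>
    (∑ A : Fin n → Bool, ∑ B : Fin n → Bool,
      Real.negMulLog ((ρ {p : BinSeq × BinSeq |
        (∀ i : Fin n, p.1 ((i : ℕ) : ℤ) = A i) ∧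
        (∀ i : Fin n, p.2 ((i : ℕ) : ℤ) = B i)}).toReal))
      / ((n : ℝ) * Real.log 2)) Filter.atTop

open scoped Classical in
/-- Topological pressure (base-2) of a subshift `X` with potential `φ`:
`𝒫_{X,φ} = lim (1/n) log₂ Σ_{A ∈ ℒ_n(X)} 2^{sup_{x ∈ [A] ∩ X} φ⁽ⁿ⁾(x)}`. -/
noncomputable def pressure (X : Set BinSeq) (φ : BinSeq → ℝ) : ℝ :=
  Filter.limsup (fun n : ℕ =>
    Real.logb 2 (∑ A : Fin n → Bool,
      if ∃ x ∈ X, ∀ i : Fin n, x ((i : ℕ) : ℤ) = A i then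
        (2 : ℝ) ^ sSup {r : ℝ | ∃ x ∈ X, (∀ i : Fin n, x ((i : ℕ) : ℤ) = A i) ∧
          r = ∑ k ∈ Finset.range n, φ (shift^[k] x)}
      else 0) / (n : ℝ)) Filter.atTop

/-- Birkhoff average of a continuous function along the first `N` points of the `T`-orbit. -/
noncomputable def birkAvg {α : Type*} [TopologicalSpace α] (T : α → α) (x : α) (N : ℕ)
    (f : C(α, ℝ)) : ℝ :=
  (∑ n ∈ Finset.range N, f (T^[n] x)) / (N : ℝ)

/-- `x` is quasi-generic for `μ` along `(N i)`: the empirical measures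
`(1/N_i) Σ_{n<N_i} δ_{T^n x}` converge weakly-* to `μ`. -/
def QuasiGenericAlong {α : Type*} [TopologicalSpace α] [MeasurableSpace α]
    (T : α → α) (x : α) (N : ℕ → ℕ) (μ : Measure α) : Prop :=
  ∀ f : C(α, ℝ), Filter.Tendsto (fun i => birkAvg T x (N i) f) Filter.atTop
    (nhds (∫ y, f y ∂μ))

/-- `x` is generic for `μ`. -/
def GenericFor {α : Type*} [TopologicalSpace α] [MeasurableSpace α]
    (T : α → α) (x : α) (μ : Measure α) : Prop :=
  QuasiGenericAlong T x (fun i => i) μ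

/-- Weak-* convergence of a sequence of measures. -/
def WeakTendsto {α : Type*} [TopologicalSpace α] [MeasurableSpace α]
    (μs : ℕ → Measure α) (μ : Measure α) : Prop :=
  ∀ f : C(α, ℝ), Filter.Tendsto (fun K => ∫ y, f y ∂(μs K)) Filter.atTop
    (nhds (∫ y, f y ∂μ))

/-- `V(y)`: the invariant measures for which `y` is quasi-generic (along some
increasing sequence). -/
def Vset (y : BinSeq) : Set (Measure BinSeq) :=
  {μ | μ ∈ InvProb shift ∧ ∃ N : ℕ → ℕ, StrictMono N ∧ QuasiGenericAlong shift y N μ}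

/-- `V_{(N_i)}(y)`: the invariant measures for which `y` is quasi-generic along a
subsequence of `(N_i)`. -/
def VsetAlong (N : ℕ → ℕ) (y : BinSeq) : Set (Measure BinSeq) :=
  {μ | μ ∈ InvProb shift ∧ ∃ φ : ℕ → ℕ, StrictMono φ ∧ QuasiGenericAlong shift y (N ∘ φ) μ}

/-- `β` is the Bernoulli product measure on `{0,1}^ℤ` with `β({x : x₀ = 0}) = p`. -/
def IsBernoulli (p : ENNReal) (β : Measure BinSeq) : Prop :=
  IsProbabilityMeasure β ∧ ∀ (s : Finset ℤ) (A : ℤ → Bool),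
    β {x : BinSeq | ∀ i ∈ s, x i = A i} = ∏ i ∈ s, (if A i = false then p else 1 - p)


/-! The diagonal coupling `(x, x)` shows `ν ∈ 𝓜(X)`. Since `M(w, x) ≤ w` coordinatewise, every
`M_*ρ` has density at most that of its first marginal `ν`; if the densities agree, shift invariance
makes them agree at every coordinate, so `M = π₁` `ρ`-almost everywhere and `M_*ρ = ν`. Thus `ν` is
the unique maximiser of the density on `𝓜(X)`, which also makes the base measure unique.
Ergodicity: conditioning `ν` on an invariant set `s` or on `sᶜ` stays inside `𝓜(X)`, and `ν(1)` is
the average of the two conditional densities, so both attain the maximum; then `ν(· | s) = ν`,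
forcing `ν(sᶜ) = 0`. -/

open ProbabilityTheory

section InvariantMeasures

variable {α β : Type*} [MeasurableSpace α] [MeasurableSpace β]

theorem map_mem_invProb_of_semiconj {T : α → α} {S : β → β} {f : α → β} {μ : Measure α}
    (hμ : μ ∈ InvProb T) (hf : Measurable f) (hT : Measurable T) (hS : Measurable S)
    (h : Function.Semiconj f T S) : μ.map f ∈ InvProb S :=
  have := hμ.1
  ⟨Measure.isProbabilityMeasure_map hf.aemeasurable, by
    rw [Measure.map_map hS hf, ← h.comp_eq, ← Measure.map_map hf hT, hμ.2]⟩

theorem cond_mem_invProb {T : α → α} {μ : Measure α} {s : Set α} (hμ : μ ∈ InvProb T)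
    (hT : Measurable T) (hs : MeasurableSet s) (hinv : T ⁻¹' s = s) (hμs : μ s ≠ 0) :
    μ[|s] ∈ InvProb T := by
  have := hμ.1
  refine ⟨cond_isProbabilityMeasure hμs, ?_⟩
  have hres : MeasurePreserving T (μ.restrict s) (μ.restrict s) := by
    simpa only [hinv] using (MeasurePreserving.mk hT hμ.2).restrict_preimage hs
  rw [ProbabilityTheory.cond, Measure.map_smul, hres.map_eq]

theorem cond_apply_eq_one {μ : Measure α} [IsProbabilityMeasure μ] {s t : Set α}
    (hs : MeasurableSet s) (hμs : μ s ≠ 0) (ht : μ t = 1) : μ[t|s] = 1 := by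
  rw [cond_apply hs, Set.inter_comm, Measure.measure_inter_eq_of_measure_eq hs
    (ht.trans measure_univ.symm) (Set.subset_univ t) (by simp [ht]), Set.univ_inter,
    ENNReal.inv_mul_cancel hμs (measure_ne_top μ s)]

theorem ergodic_of_unique_maximizer {T : α → α} {ν : Measure α} [IsProbabilityMeasure ν]
    {C : Set (Measure α)} {A : Set α} (hT : MeasurePreserving T ν ν)
    (hcond : ∀ s, MeasurableSet s → T ⁻¹' s = s → ν s ≠ 0 → ν[|s] ∈ C)
    (hle : ∀ μ ∈ C, μ A ≤ ν A) (heq : ∀ μ ∈ C, μ A = ν A → μ = ν) : Ergodic T ν := by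
  refine ⟨hT, ⟨fun s hs hinv => ?_⟩⟩
  rw [eventuallyConst_set', ae_eq_empty, ae_eq_univ]
  by_contra! ⟨hs0, hsc0⟩
  have hinvc : T ⁻¹' sᶜ = sᶜ := by rw [Set.preimage_compl, hinv]
  have hcondA : ν[A|s] = ν A := by
    by_contra hne
    have hlt := (hle _ (hcond s hs hinv hs0)).lt_of_ne hne
    have : ν A < ν A := calc
      ν A = ν[A|s] * ν s + ν[A|sᶜ] * ν sᶜ := (cond_add_cond_compl_eq hs ν).symm
      _ < ν A * ν s + ν A * ν sᶜ := by
        refine ENNReal.add_lt_add_of_lt_of_le (by finiteness) ?_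
          (mul_le_mul_left (hle _ (hcond _ hs.compl hinvc hsc0)) _)
        exact ENNReal.mul_lt_mul_left hs0 (measure_ne_top ν s) hlt
      _ = ν A := by rw [← mul_add, measure_add_measure_compl hs, measure_univ, mul_one]
    exact lt_irrefl _ this
  apply hsc0
  rw [← heq _ (hcond s hs hinv hs0) hcondA, cond_apply hs, Set.inter_compl_self, measure_empty,
    mul_zero]

end InvariantMeasures

theorem measurable_shift : Measurable shift :=
  measurable_pi_lambda _ fun n => measurable_pi_apply (n + 1)

theorem measurable_shift2 : Measurable shift2 :=
  measurable_shift.prodMap measurable_shift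

theorem measurable_Mmul : Measurable Mmul := by
  unfold Mmul
  fun_prop

theorem measurableSet_coord_eq (k : ℤ) (b : Bool) : MeasurableSet {x : BinSeq | x k = b} :=
  measurableSet_eq_fun (measurable_pi_apply k) measurable_const

theorem measure_coord_eq_cylB {μ : Measure BinSeq} (hμ : μ.map shift = μ) (k : ℤ) (b : Bool) :
    μ {x | x k = b} = μ (cylB b) := by
  have hper : Function.Periodic (fun k : ℤ => μ {x : BinSeq | x k = b}) 1 := fun k => by
    show μ {x | x (k + 1) = b} = μ {x | x k = b}
    conv_rhs => rw [← hμ]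
    rw [Measure.map_apply measurable_shift (measurableSet_coord_eq k b)]
    rfl
  simpa [cylB] using hper.int_mul_eq k

theorem ae_eq_of_leSeq_of_measure_coord_le {β : Type*} [MeasurableSpace β] {ρ : Measure β}
    [IsFiniteMeasure ρ] {f g : β → BinSeq} (hf : Measurable f) (hle : ∀ p, leSeq (f p) (g p))
    (h : ∀ k, ρ {p | g p k = true} ≤ ρ {p | f p k = true}) : f =ᵐ[ρ] g := by
  have hcoord (k : ℤ) : ∀ᵐ p ∂ρ, f p k = g p k := by
    have hsub : {p | f p k = true} ⊆ {p | g p k = true} := fun p hp =>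
      Bool.eq_true_of_true_le (hp ▸ hle p k)
    have hmeas : MeasurableSet {p | f p k = true} := hf (measurableSet_coord_eq k true)
    filter_upwards [(ae_eq_of_subset_of_measure_ge hsub (h k) hmeas.nullMeasurableSet
      (measure_ne_top ρ _)).mem_iff] with p hp
    exact Bool.eq_iff_iff.mpr hp
  filter_upwards [ae_all_iff.mpr hcoord] with p hp
  exact funext hp

theorem map_Mmul_apply_cylB_le (ρ : Measure (BinSeq × BinSeq)) :
    ρ.map Mmul (cylB true) ≤ ρ.map Prod.fst (cylB true) := by
  rw [cylB, Measure.map_apply measurable_Mmul (measurableSet_coord_eq 0 true),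
    Measure.map_apply measurable_fst (measurableSet_coord_eq 0 true)]
  exact measure_mono fun p hp => (Bool.and_eq_true _ _).mp hp |>.1

theorem map_Mmul_eq_map_fst_of_apply_cylB_eq {ρ : Measure (BinSeq × BinSeq)}
    (hρ : ρ ∈ InvProb shift2) (h : ρ.map Mmul (cylB true) = ρ.map Prod.fst (cylB true)) :
    ρ.map Mmul = ρ.map Prod.fst := by
  have := hρ.1
  refine Measure.map_congr (ae_eq_of_leSeq_of_measure_coord_le measurable_Mmul
    (fun p n => Bool.and_le_left _ _) fun k => ?_)
  have hM := (map_mem_invProb_of_semiconj hρ measurable_Mmul measurable_shift2 measurable_shift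
    fun _ => rfl).2
  have hfst := (map_mem_invProb_of_semiconj hρ measurable_fst measurable_shift2 measurable_shift
    fun _ => rfl).2
  have hcoord := measurableSet_coord_eq k true
  refine le_of_eq ?_
  calc ρ {p | p.1 k = true} = ρ.map Prod.fst {x | x k = true} :=
        (Measure.map_apply measurable_fst hcoord).symm
    _ = ρ.map Mmul {x | x k = true} := by
      rw [measure_coord_eq_cylB hM, measure_coord_eq_cylB hfst, h]
    _ = ρ {p | Mmul p k = true} := Measure.map_apply measurable_Mmul hcoord

namespace Subord

variable {X : Set BinSeq} {ν : Measure BinSeq}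

theorem mem_measOn (hsub : Subord X ν) (hν : ν ∈ InvProb shift) : ν ∈ MeasOn X := by
  have hdiag : Measurable fun x : BinSeq => (x, x) := measurable_id.prodMk measurable_id
  rw [hsub]
  refine ⟨ν.map fun x => (x, x),
    map_mem_invProb_of_semiconj hν hdiag measurable_shift measurable_shift2 fun _ => rfl, ?_, ?_⟩
  · rw [Measure.map_map measurable_fst hdiag]
    exact Measure.map_id
  · rw [Measure.map_map measurable_Mmul hdiag]
    convert Measure.map_id
    ext x n
    exact Bool.and_self (x n)

theorem apply_cylB_le (hsub : Subord X ν) {μ : Measure BinSeq} (hμ : μ ∈ MeasOn X) :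
    μ (cylB true) ≤ ν (cylB true) := by
  rw [hsub] at hμ
  obtain ⟨ρ, -, rfl, rfl⟩ := hμ
  exact map_Mmul_apply_cylB_le ρ

theorem eq_of_apply_cylB_eq (hsub : Subord X ν) {μ : Measure BinSeq} (hμ : μ ∈ MeasOn X)
    (h : μ (cylB true) = ν (cylB true)) : μ = ν := by
  rw [hsub] at hμ
  obtain ⟨ρ, hρ, rfl, rfl⟩ := hμ
  exact map_Mmul_eq_map_fst_of_apply_cylB_eq hρ h

theorem ergodic (hsub : Subord X ν) (hν : ν ∈ InvProb shift) : Ergodic shift ν :=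
  have := hν.1
  ergodic_of_unique_maximizer (C := MeasOn X) (A := cylB true) ⟨measurable_shift, hν.2⟩
    (fun _ hs hinv hs0 => ⟨cond_mem_invProb hν measurable_shift hs hinv hs0,
      cond_apply_eq_one hs hs0 (hsub.mem_measOn hν).2⟩)
    (fun _ => hsub.apply_cylB_le) (fun _ => hsub.eq_of_apply_cylB_eq)

end Subord

theorem stmt0_general (X : Set BinSeq) (ν : Measure BinSeq)
    (hν : ν ∈ InvProb shift) (hsub : Subord X ν) :
    (∀ ν' ∈ InvProb shift, Subord X ν' → ν' = ν) ∧
    Ergodic shift ν ∧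
    ν ∈ MeasOn X ∧
    (∀ μ ∈ MeasOn X, μ (cylB true) ≤ ν (cylB true)) ∧
    (∀ μ ∈ MeasOn X, μ (cylB true) = ν (cylB true) → μ = ν) := by
  have hνX := hsub.mem_measOn hν
  refine ⟨fun ν' hν' hsub' => ?_, hsub.ergodic hν, hνX, fun _ => hsub.apply_cylB_le,
    fun _ => hsub.eq_of_apply_cylB_eq⟩
  have hν'X := hsub'.mem_measOn hν'
  exact hsub.eq_of_apply_cylB_eq hν'X
    ((hsub.apply_cylB_le hν'X).antisymm (hsub'.apply_cylB_le hνX))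

/-- For a measure-theoretically subordinate subshift `X`, the base measure `ν`
is unique and ergodic; moreover it is the unique measure of maximal density on `X`. -/
theorem stmt0 (X : Set BinSeq) (ν : Measure BinSeq)
    (hX : IsSubshift X) (hν : ν ∈ InvProb shift) (hsub : Subord X ν) :
    (∀ ν' ∈ InvProb shift, Subord X ν' → ν' = ν) ∧
    Ergodic shift ν ∧
    ν ∈ MeasOn X ∧
    (∀ μ ∈ MeasOn X, μ (cylB true) ≤ ν (cylB true)) ∧
    (∀ μ ∈ MeasOn X, μ (cylB true) = ν (cylB true) → μ = ν) :=
  stmt0_general X ν hν hsub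
end

section
/- Let X ⊆ {0,1}^ℤ be a measure-theoretically subordinate subshift with base measure ν. Then the subshift X' := M(supp(ν) × {0,1}^ℤ), the hereditary closure of the topological support of ν, satisfies X' ⊆ X and 𝓜(X) = 𝓜(X'). -/
open MeasureTheory Filter Topology

/-- The topological support of a measure: points all of whose open neighbourhoods have
positive measure. -/
def mSupp (ν : Measure BinSeq) : Set BinSeq :=
  {x : BinSeq | ∀ U : Set BinSeq, IsOpen U → x ∈ U → 0 < ν U}

/-! For `w ∈ supp ν` and a periodic `y`, the product of `ν` with the uniform measure on the
orbit of `y` is a `σ × σ`-invariant joining with first marginal `ν` that charges every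
neighbourhood of `(w, y)`. Its image under `M` lies in `𝓜(X)`, so, `X` being closed,
`M(w, y) ∈ X`; since periodic points are dense, `X' ⊆ X`. Conversely a joining with first
marginal `ν` is carried by `supp ν × {0,1}^ℤ`, so its image under `M` is carried by `X'`. -/

open scoped ENNReal

namespace MeasureTheory.Measure

section OrbitMeasure

variable {α : Type*} [MeasurableSpace α]

noncomputable def orbitMeasure (T : α → α) (x : α) (q : ℕ) : Measure α :=
  (q : ℝ≥0∞)⁻¹ • ∑ k ∈ Finset.range q, dirac (T^[k] x)

lemma isProbabilityMeasure_orbitMeasure (T : α → α) (x : α) {q : ℕ} (hq : q ≠ 0) :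
    IsProbabilityMeasure (orbitMeasure T x q) :=
  ⟨by simp [orbitMeasure, ENNReal.inv_mul_cancel, hq]⟩

lemma map_orbitMeasure {T : α → α} (hT : Measurable T) {x : α} {q : ℕ}
    (hx : Function.IsPeriodicPt T q x) : map T (orbitMeasure T x q) = orbitMeasure T x q := by
  have hsum : map T (∑ k ∈ Finset.range q, dirac (T^[k] x))
      = ∑ k ∈ Finset.range q, dirac (T^[k + 1] x) := by
    rw [← mapₗ_apply_of_measurable hT, _root_.map_sum]
    simp only [mapₗ_apply_of_measurable hT, map_dirac' hT, Function.iterate_succ_apply']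
  rw [orbitMeasure, Measure.map_smul, hsum]
  congr 1
  cases q with
  | zero => simp
  | succ n =>
    rw [Finset.sum_range_succ (fun k => dirac (T^[k + 1] x)),
      Finset.sum_range_succ' (fun k => dirac (T^[k] x)), hx.eq, Function.iterate_zero_apply]

lemma mem_support_orbitMeasure [TopologicalSpace α] [OpensMeasurableSpace α] (T : α → α)
    (x : α) {q : ℕ} (hq : q ≠ 0) : x ∈ (orbitMeasure T x q).support := by
  rw [support_eq_forall_isOpen]
  intro U hxU hU
  have hdirac : 1 ≤ ∑ k ∈ Finset.range q, dirac (T^[k] x) U := by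
    calc 1 = dirac (T^[0] x) U := (dirac_apply_of_mem hxU).symm
      _ ≤ _ := Finset.single_le_sum (f := fun k => dirac (T^[k] x) U) (fun _ _ => zero_le)
          (Finset.mem_range.mpr (Nat.pos_of_ne_zero hq))
  calc 0 < (q : ℝ≥0∞)⁻¹ * 1 := by simp
    _ ≤ orbitMeasure T x q U := by
      rw [orbitMeasure, smul_apply, smul_eq_mul, finsetSum_apply]
      gcongr

end OrbitMeasure

lemma mk_mem_support_prod {α β : Type*} [TopologicalSpace α] [MeasurableSpace α]
    [TopologicalSpace β] [MeasurableSpace β] {μ : Measure α} {ν : Measure β} [SFinite ν]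
    {x : α} {y : β} (hx : x ∈ μ.support) (hy : y ∈ ν.support) :
    (x, y) ∈ (μ.prod ν).support := by
  rw [mem_support_iff_forall] at hx hy ⊢
  intro U hU
  obtain ⟨V, hV, W, hW, hVW⟩ := mem_nhds_prod_iff.mp hU
  calc 0 < μ V * ν W := ENNReal.mul_pos (hx V hV).ne' (hy W hW).ne'
    _ = μ.prod ν (V ×ˢ W) := (prod_prod V W).symm
    _ ≤ μ.prod ν U := measure_mono hVW

lemma image_support_subset_of_ae_mem {α β : Type*} [TopologicalSpace α] [MeasurableSpace α]
    [TopologicalSpace β] {μ : Measure α} {f : α → β} (hf : Continuous f) {s : Set β}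
    (hs : IsClosed s) (h : ∀ᵐ x ∂μ, f x ∈ s) : f '' μ.support ⊆ s := by
  rintro _ ⟨x, hx, rfl⟩
  by_contra hfx
  exact ((mem_support_iff_forall x).mp hx _
    ((hs.isOpen_compl.preimage hf).mem_nhds hfx)).ne' (ae_iff.mp h)

end MeasureTheory.Measure

open MeasureTheory.Measure

lemma mSupp_eq_support (ν : Measure BinSeq) : mSupp ν = ν.support := by
  ext x
  simp only [mSupp, support_eq_forall_isOpen, Set.mem_ofPred_eq]
  exact forall_congr' fun U => forall_comm

lemma continuous_shift : Continuous shift :=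
  continuous_pi fun n => continuous_apply (n + 1)

lemma continuous_Mmul : Continuous Mmul :=
  continuous_pi fun n =>
    (continuous_of_discreteTopology (f := fun b : Bool × Bool => b.1 && b.2)).comp
      (by fun_prop : Continuous fun p : BinSeq × BinSeq => (p.1 n, p.2 n))

lemma shift_iterate_apply (k : ℕ) (x : BinSeq) (m : ℤ) : shift^[k] x m = x (m + k) := by
  induction k generalizing x with
  | zero => simp
  | succ k ih =>
    rw [Function.iterate_succ_apply, ih]
    simp only [shift, Nat.cast_succ, add_comm (k : ℤ) 1, add_assoc]

lemma measOn_mono {X Y : Set BinSeq} (h : Y ⊆ X) : MeasOn Y ⊆ MeasOn X := fun _ hμ =>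
  have := hμ.1.1
  ⟨hμ.1, le_antisymm prob_le_one (hμ.2 ▸ measure_mono h)⟩

/-- The `q`-periodic sequence that agrees with `y` on the window `-q ≤ 2k < q`. -/
def periodize (y : BinSeq) (q : ℕ) : BinSeq := fun k => y (k.bmod q)

lemma isPeriodicPt_periodize (y : BinSeq) (q : ℕ) :
    Function.IsPeriodicPt shift q (periodize y q) := by
  funext m
  simp [periodize, shift_iterate_apply]

lemma tendsto_periodize (y : BinSeq) : Tendsto (periodize y) atTop (𝓝 y) := by
  rw [tendsto_pi_nhds]
  intro m
  refine tendsto_const_nhds.congr' ?_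
  filter_upwards [eventually_ge_atTop (2 * m.natAbs + 1)] with q hq
  exact congrArg y (Int.bmod_eq_of_le_mul_two (by omega) (by omega)).symm

namespace Subord

variable {X : Set BinSeq} {ν : Measure BinSeq}

lemma image_support_subset (hsub : Subord X ν) (hX : IsClosed X)
    {ρ : Measure (BinSeq × BinSeq)} (hρ : ρ ∈ InvProb shift2) (hfst : map Prod.fst ρ = ν) :
    Mmul '' ρ.support ⊆ X := by
  have hμ : map Mmul ρ ∈ MeasOn X := hsub ▸ ⟨ρ, hρ, hfst, rfl⟩
  have := hμ.1.1
  have hae : ∀ᵐ z ∂(map Mmul ρ), z ∈ X :=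
    (ae_mem_iff_measure_eq hX.measurableSet.nullMeasurableSet).mpr (by simp [hμ.2])
  exact image_support_subset_of_ae_mem continuous_Mmul hX
    (ae_of_ae_map continuous_Mmul.aemeasurable hae)

lemma mmul_mem_of_isPeriodicPt (hsub : Subord X ν) (hX : IsClosed X)
    (hν : ν ∈ InvProb shift) {w p : BinSeq} (hw : w ∈ ν.support) {q : ℕ}
    (hp : Function.IsPeriodicPt shift q p) (hq : q ≠ 0) : Mmul (w, p) ∈ X := by
  have := hν.1
  have := isProbabilityMeasure_orbitMeasure shift p hq
  have hρ : ν.prod (orbitMeasure shift p q) ∈ InvProb shift2 := by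
    refine ⟨inferInstance, ?_⟩
    rw [shift2, ← map_prod_map _ _ continuous_shift.measurable continuous_shift.measurable,
      hν.2, map_orbitMeasure continuous_shift.measurable hp]
  refine hsub.image_support_subset hX hρ (by simp) ⟨(w, p), ?_, rfl⟩
  exact mk_mem_support_prod hw (mem_support_orbitMeasure shift p hq)

lemma hereditary_support_subset (hsub : Subord X ν) (hX : IsClosed X)
    (hν : ν ∈ InvProb shift) : Mmul '' (ν.support ×ˢ Set.univ) ⊆ X := by
  rintro _ ⟨⟨w, y⟩, ⟨hw, -⟩, rfl⟩
  have hlim : Tendsto (fun q => Mmul (w, periodize y q)) atTop (𝓝 (Mmul (w, y))) :=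
    (continuous_Mmul.comp (Continuous.prodMk_right w)).continuousAt.tendsto.comp
      (tendsto_periodize y)
  refine hX.mem_of_tendsto hlim ?_
  filter_upwards [eventually_ge_atTop 1] with q hq
  exact hsub.mmul_mem_of_isPeriodicPt hX hν hw (isPeriodicPt_periodize y q) (by omega)

lemma measure_hereditary_support (hsub : Subord X ν) {μ : Measure BinSeq}
    (hμ : μ ∈ MeasOn X) : μ (Mmul '' (ν.support ×ˢ Set.univ)) = 1 := by
  obtain ⟨ρ, -, hfst, rfl⟩ := hsub ▸ hμ
  have := hμ.1.1
  have hclosed : IsClosed (Mmul '' (ν.support ×ˢ Set.univ)) :=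
    ((isClosed_support.isCompact.prod isCompact_univ).image continuous_Mmul).isClosed
  have hfst_ae : ∀ᵐ p ∂ρ, p.1 ∈ ν.support :=
    ae_of_ae_map measurable_fst.aemeasurable (hfst ▸ support_mem_ae)
  have hae : ∀ᵐ z ∂(map Mmul ρ), z ∈ Mmul '' (ν.support ×ˢ Set.univ) :=
    (ae_map_iff continuous_Mmul.aemeasurable hclosed.measurableSet).mpr
      (hfst_ae.mono fun p hp => ⟨p, ⟨hp, trivial⟩, rfl⟩)
  rw [(ae_mem_iff_measure_eq hclosed.measurableSet.nullMeasurableSet).mp hae, measure_univ]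

end Subord

/-- For a measure-theoretically subordinate subshift `X` with base measure `ν`,
the hereditary closure `X' = M(supp ν × {0,1}^ℤ)` of the support of `ν` satisfies `X' ⊆ X` and
`𝓜(X) = 𝓜(X')`. -/
theorem stmt1 (X : Set BinSeq) (ν : Measure BinSeq)
    (hX : IsSubshift X) (hν : ν ∈ InvProb shift) (hsub : Subord X ν) :
    Mmul '' (mSupp ν ×ˢ (Set.univ : Set BinSeq)) ⊆ X ∧
    MeasOn X = MeasOn (Mmul '' (mSupp ν ×ˢ (Set.univ : Set BinSeq))) := by
  rw [mSupp_eq_support]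
  have hsubset := hsub.hereditary_support_subset hX.1 hν
  refine ⟨hsubset, (measOn_mono hsubset).antisymm' fun μ hμ => ⟨hμ.1, ?_⟩⟩
  exact hsub.measure_hereditary_support hμ
end
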